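/- Let X be a Banach space, n ≥ 1, (x_k^{(j)}) ⊆ X a family indexed by 𝔻₁ⁿ, and for r > 0 set S_r := ess sup_{t∈[0,1)} (Σ_{k=1}^n ‖Σ_{j=1}^{2^{k-1}} x_k^{(j)} χ_k^{(j)}(t)‖^r)^{1/r}. For l ≥ 1 define 𝔽_l := {(k,j) ∈ 𝔻₁ⁿ : S_r/2^{l/r} < 2^{(k-1)/2}‖x_k^{(j)}‖ ≤ S_r/2^{(l-1)/r}}. Then for every t ∈ [0,1), |𝔽_l ∩ 𝔹(t)| < 2^l; in particular each 𝔽_l has local height less than 2^l. -/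

import Mathlib

open MeasureTheory Real Set
open scoped Classical

noncomputable section

/-- The dyadic interval `Δ_k^{(j)} = [(j-1)/2^k, j/2^k)`. -/
def dyadic (k : ℕ) (j : ℤ) : Set ℝ := Set.Ico (((j : ℝ) - 1) / 2 ^ k) ((j : ℝ) / 2 ^ k)

/-- The Haar function `χ_k^{(j)}`. -/
def haar (k : ℕ) (j : ℤ) (t : ℝ) : ℝ :=
  if t ∈ dyadic k (2 * j - 1) then (2 : ℝ) ^ (((k : ℝ) - 1) / 2)
  else if t ∈ dyadic k (2 * j) then -(2 : ℝ) ^ (((k : ℝ) - 1) / 2)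
  else 0

/-- Membership in the dyadic tree `𝔻`. -/
def memD (kj : ℕ × ℤ) : Prop := 1 ≤ kj.1 ∧ 1 ≤ kj.2 ∧ kj.2 ≤ 2 ^ (kj.1 - 1)

/-- The finite dyadic tree `𝔻_m^n`. -/
def Dtree (m n : ℕ) : Finset (ℕ × ℤ) :=
  (Finset.Icc m n).biUnion fun k => (Finset.Icc (1 : ℤ) (2 ^ (k - 1))).image fun j => (k, j)

/-- Number of indices of `F` lying on the branch through `t`. -/
def branchCount (F : Finset (ℕ × ℤ)) (t : ℝ) : ℕ :=
  (F.filter fun kj => t ∈ dyadic (kj.1 - 1) kj.2).card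

/-- The local height of a finite index set. -/
def lh (F : Finset (ℕ × ℤ)) : ℕ :=
  sSup {m | ∃ t ∈ Set.Ico (0 : ℝ) 1, branchCount F t = m}

/-- The transformation `φ_h^{(i)}` interchanging `Δ_{h+1}^{(4i-2)}` and `Δ_{h+1}^{(4i-1)}`. -/
def phi (h : ℕ) (i : ℤ) (t : ℝ) : ℝ :=
  if t ∈ dyadic (h + 1) (4 * i - 2) then t + 1 / 2 ^ (h + 1)
  else if t ∈ dyadic (h + 1) (4 * i - 1) then t - 1 / 2 ^ (h + 1)
  else t

/-- The Haar type ideal norm `τ(T | ℋ(F))`. -/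
def tau {X Y : Type*} [NormedAddCommGroup X] [NormedSpace ℝ X]
    [NormedAddCommGroup Y] [NormedSpace ℝ Y]
    (T : X →L[ℝ] Y) (F : Finset (ℕ × ℤ)) : ℝ :=
  sInf {c : ℝ | 0 ≤ c ∧ ∀ x : ℕ × ℤ → X,
    Real.sqrt (∫ t in Set.Ico (0 : ℝ) 1, ‖∑ kj ∈ F, haar kj.1 kj.2 t • T (x kj)‖ ^ 2)
      ≤ c * Real.sqrt (∑ kj ∈ F, ‖x kj‖ ^ 2)}

end

section Aux

lemma two_rpow_pos (e : ℝ) : (0:ℝ) < (2:ℝ) ^ e := Real.rpow_pos_of_pos (by norm_num) e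

lemma dyadic_eq_of_mem {h : ℕ} {j j' : ℤ} {t : ℝ}
    (h1 : t ∈ dyadic h j) (h2 : t ∈ dyadic h j') : j = j' := by
  obtain ⟨a1, a2⟩ := h1
  obtain ⟨b1, b2⟩ := h2
  have hp : (0:ℝ) < 2 ^ h := by positivity
  have e1 : (j:ℝ) - 1 < j' := by
    have h3 := a1.trans_lt b2
    rw [div_lt_div_iff₀ hp hp] at h3
    nlinarith
  have e2 : (j':ℝ) - 1 < j := by
    have h3 := b1.trans_lt a2
    rw [div_lt_div_iff₀ hp hp] at h3
    nlinarith
  have e1' : j - 1 < j' := by exact_mod_cast (by push_cast; linarith : ((j - 1 : ℤ) : ℝ) < (j' : ℝ))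
  have e2' : j' - 1 < j := by exact_mod_cast (by push_cast; linarith : ((j' - 1 : ℤ) : ℝ) < (j : ℝ))
  omega

lemma dyadic_nested {h h' : ℕ} (hh : h ≤ h') {j j' : ℤ} {t : ℝ}
    (h1 : t ∈ dyadic h j) (h2 : t ∈ dyadic h' j') : dyadic h' j' ⊆ dyadic h j := by
  obtain ⟨a1, a2⟩ := h1
  obtain ⟨b1, b2⟩ := h2
  obtain ⟨d, rfl⟩ := Nat.exists_eq_add_of_le hh
  have hp : (0:ℝ) < 2 ^ h := by positivity
  have hq : (0:ℝ) < 2 ^ (h + d) := by positivity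
  have hd : (0:ℝ) < 2 ^ d := by positivity
  have key1 : (j - 1) * 2 ^ d ≤ j' - 1 := by
    have h3 := a1.trans_lt b2
    rw [div_lt_div_iff₀ hp hq, pow_add] at h3
    have hR : ((j:ℝ) - 1) * 2 ^ d < (j' : ℝ) := by nlinarith
    have : (j - 1) * 2 ^ d < j' := by
      exact_mod_cast (by push_cast; linarith : (((j-1) * 2^d : ℤ) : ℝ) < (j' : ℝ))
    omega
  have key2 : j' ≤ j * 2 ^ d := by
    have h3 := b1.trans_lt a2
    rw [div_lt_div_iff₀ hq hp, pow_add] at h3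
    have hR : ((j':ℝ) - 1) < (j : ℝ) * 2 ^ d := by nlinarith
    have : j' - 1 < j * 2 ^ d := by
      exact_mod_cast (by push_cast; linarith : (((j'-1) : ℤ) : ℝ) < ((j * 2^d : ℤ) : ℝ))
    omega
  intro s hs
  obtain ⟨c1, c2⟩ := hs
  constructor
  · calc ((j:ℝ) - 1) / 2 ^ h = ((j:ℝ) - 1) * 2 ^ d / 2 ^ (h + d) := by
          rw [pow_add]; field_simp
    _ ≤ ((j':ℝ) - 1) / 2 ^ (h + d) := by
          have k1R : ((j:ℝ) - 1) * 2 ^ d ≤ (j':ℝ) - 1 := by exact_mod_cast key1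
          gcongr
    _ ≤ s := c1
  · calc s < (j':ℝ) / 2 ^ (h + d) := c2
    _ ≤ (j:ℝ) * 2 ^ d / 2 ^ (h + d) := by
          have k2R : (j':ℝ) ≤ (j:ℝ) * 2 ^ d := by exact_mod_cast key2
          gcongr
    _ = (j:ℝ) / 2 ^ h := by rw [pow_add]; field_simp

lemma dyadic_split {k : ℕ} (hk : 1 ≤ k) (j : ℤ) :
    dyadic (k - 1) j = dyadic k (2 * j - 1) ∪ dyadic k (2 * j) := by
  obtain ⟨m, rfl⟩ : ∃ m, k = m + 1 := ⟨k - 1, by omega⟩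
  have hp : (0:ℝ) < 2 ^ (m + 1) := by positivity
  simp only [dyadic, Nat.add_sub_cancel]
  push_cast
  rw [Set.Ico_union_Ico_eq_Ico (by gcongr <;> norm_num) (by gcongr <;> norm_num)]
  have e1 : ((j:ℝ) - 1) / 2 ^ m = (2 * (j:ℝ) - 1 - 1) / 2 ^ (m + 1) := by
    rw [div_eq_div_iff (by positivity) (by positivity), pow_succ]; ring
  have e2 : ((j:ℝ)) / 2 ^ m = 2 * (j:ℝ) / 2 ^ (m + 1) := by
    rw [div_eq_div_iff (by positivity) (by positivity), pow_succ]; ring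
  rw [e1, e2]

lemma abs_haar {k : ℕ} (hk : 1 ≤ k) {j : ℤ} {s : ℝ} (hs : s ∈ dyadic (k - 1) j) :
    |haar k j s| = (2:ℝ) ^ (((k : ℝ) - 1) / 2) := by
  rw [dyadic_split hk] at hs
  unfold haar
  rcases hs with h | h
  · rw [if_pos h]; exact abs_of_pos (two_rpow_pos _)
  · have hns : s ∉ dyadic k (2 * j - 1) := fun h' => by
      have := dyadic_eq_of_mem h' h; omega
    rw [if_neg hns, if_pos h, abs_neg]; exact abs_of_pos (two_rpow_pos _)

lemma haar_eq_zero {k : ℕ} (hk : 1 ≤ k) {j : ℤ} {s : ℝ} (hs : s ∉ dyadic (k - 1) j) :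
    haar k j s = 0 := by
  rw [dyadic_split hk] at hs
  simp only [Set.mem_union, not_or] at hs
  unfold haar
  rw [if_neg hs.1, if_neg hs.2]

lemma abs_haar_le (k : ℕ) (j : ℤ) (s : ℝ) : |haar k j s| ≤ (2:ℝ) ^ (((k : ℝ) - 1) / 2) := by
  unfold haar
  split_ifs
  · exact le_of_eq (abs_of_pos (two_rpow_pos _))
  · rw [abs_neg]; exact le_of_eq (abs_of_pos (two_rpow_pos _))
  · simp [(two_rpow_pos (((k : ℝ) - 1) / 2)).le]

lemma mem_Dtree {n : ℕ} {kj : ℕ × ℤ} :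
    kj ∈ Dtree 1 n ↔ 1 ≤ kj.1 ∧ kj.1 ≤ n ∧ 1 ≤ kj.2 ∧ kj.2 ≤ 2 ^ (kj.1 - 1) := by
  obtain ⟨k, j⟩ := kj
  simp only [Dtree, Finset.mem_biUnion, Finset.mem_image, Finset.mem_Icc, Prod.mk.injEq]
  constructor
  · rintro ⟨k', ⟨hk1, hk2⟩, j', ⟨hj1, hj2⟩, rfl, rfl⟩
    exact ⟨hk1, hk2, hj1, hj2⟩
  · rintro ⟨h1, h2, h3, h4⟩
    exact ⟨k, ⟨h1, h2⟩, j, ⟨h3, h4⟩, rfl, rfl⟩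

lemma floor_dyadic {t : ℝ} (ht : t ∈ Set.Ico (0:ℝ) 1) (N : ℕ) :
    t ∈ dyadic N (⌊t * 2 ^ N⌋ + 1) ∧ dyadic N (⌊t * 2 ^ N⌋ + 1) ⊆ Set.Ico (0:ℝ) 1 := by
  obtain ⟨ht0, ht1⟩ := ht
  have hp : (0:ℝ) < 2 ^ N := by positivity
  constructor
  · constructor
    · push_cast
      rw [add_sub_cancel_right, div_le_iff₀ hp]
      exact Int.floor_le _
    · push_cast
      rw [lt_div_iff₀ hp]
      exact Int.lt_floor_add_one _
  · apply Set.Ico_subset_Ico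
    · push_cast
      rw [add_sub_cancel_right, le_div_iff₀ hp]
      simp only [zero_mul]
      exact_mod_cast Int.floor_nonneg.2 (by positivity)
    · rw [div_le_one hp]
      have h1 : ⌊t * 2 ^ N⌋ < (2:ℤ) ^ N := by
        rw [Int.floor_lt]
        push_cast
        nlinarith
      push_cast
      have h2 : (⌊t * 2 ^ N⌋ : ℝ) + 1 ≤ ((2:ℤ) ^ N : ℝ) := by exact_mod_cast h1
      push_cast at h2
      linarith

end Aux

theorem level_sets_local_height {X : Type*} [NormedAddCommGroup X] [NormedSpace ℝ X]
    (n : ℕ) (hn : 1 ≤ n) (x : ℕ × ℤ → X) (r : ℝ) (hr : 0 < r) (S : ℝ)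
    (hS : S = essSup
      (fun t : ℝ => (∑ k ∈ Finset.Icc 1 n,
        ‖∑ j ∈ Finset.Icc (1 : ℤ) (2 ^ (k - 1)), haar k j t • x (k, j)‖ ^ r) ^ (1 / r))
      (volume.restrict (Set.Ico (0 : ℝ) 1)))
    (l : ℕ) (hl : 1 ≤ l) :
    ∀ t ∈ Set.Ico (0 : ℝ) 1,
      branchCount ((Dtree 1 n).filter fun kj =>
        S / (2 : ℝ) ^ ((l : ℝ) / r) < (2 : ℝ) ^ (((kj.1 : ℝ) - 1) / 2) * ‖x kj‖ ∧
        (2 : ℝ) ^ (((kj.1 : ℝ) - 1) / 2) * ‖x kj‖ ≤ S / (2 : ℝ) ^ (((l : ℝ) - 1) / r)) t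
      < 2 ^ l := by
  intro t ht
  by_contra hcon
  push_neg at hcon
  set f : ℝ → ℝ := fun s => (∑ k ∈ Finset.Icc 1 n,
      ‖∑ j ∈ Finset.Icc (1 : ℤ) (2 ^ (k - 1)), haar k j s • x (k, j)‖ ^ r) ^ (1 / r) with hf
  set μ' := volume.restrict (Set.Ico (0 : ℝ) 1) with hμ'
  set G : Finset (ℕ × ℤ) := ((Dtree 1 n).filter fun kj =>
        S / (2 : ℝ) ^ ((l : ℝ) / r) < (2 : ℝ) ^ (((kj.1 : ℝ) - 1) / 2) * ‖x kj‖ ∧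
        (2 : ℝ) ^ (((kj.1 : ℝ) - 1) / 2) * ‖x kj‖ ≤ S / (2 : ℝ) ^ (((l : ℝ) - 1) / r)).filter
      (fun kj => t ∈ dyadic (kj.1 - 1) kj.2) with hG
  have hcard : 2 ^ l ≤ G.card := hcon
  have hGmem : ∀ kj ∈ G, (1 ≤ kj.1 ∧ kj.1 ≤ n ∧ 1 ≤ kj.2 ∧ kj.2 ≤ 2 ^ (kj.1 - 1)) ∧
      (S / (2 : ℝ) ^ ((l : ℝ) / r) < (2 : ℝ) ^ (((kj.1 : ℝ) - 1) / 2) * ‖x kj‖ ∧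
        (2 : ℝ) ^ (((kj.1 : ℝ) - 1) / 2) * ‖x kj‖ ≤ S / (2 : ℝ) ^ (((l : ℝ) - 1) / r)) ∧
      t ∈ dyadic (kj.1 - 1) kj.2 := by
    intro kj hkj
    rw [hG, Finset.mem_filter, Finset.mem_filter] at hkj
    exact ⟨mem_Dtree.1 hkj.1.1, hkj.1.2, hkj.2⟩
  have hGne : G.Nonempty := by
    rw [← Finset.card_pos]
    calc 0 < 2 ^ l := by positivity
    _ ≤ G.card := hcard
  have hSpos : 0 < S := by
    by_contra h
    push_neg at h
    obtain ⟨kj, hkj⟩ := hGne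
    obtain ⟨_, ⟨hP1, hP2⟩, _⟩ := hGmem kj hkj
    have hA := two_rpow_pos ((l:ℝ) / r)
    have hB := two_rpow_pos (((l:ℝ) - 1) / r)
    have hexp_le : (2:ℝ) ^ (((l:ℝ) - 1) / r) ≤ (2:ℝ) ^ ((l:ℝ) / r) := by
      apply Real.rpow_le_rpow_of_exponent_le (by norm_num)
      gcongr
      linarith
    have : S / (2:ℝ) ^ (((l:ℝ) - 1) / r) ≤ S / (2:ℝ) ^ ((l:ℝ) / r) := by
      rw [div_le_div_iff₀ hB hA]
      nlinarith
    linarith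
  -- the small interval I around t
  set N := n - 1 with hN
  set j0 : ℤ := ⌊t * 2 ^ N⌋ + 1 with hj0
  obtain ⟨htI, hI01⟩ := floor_dyadic ht N
  set I : Set ℝ := dyadic N j0 with hI
  have hIsub : ∀ kj ∈ G, I ⊆ dyadic (kj.1 - 1) kj.2 := by
    intro kj hkj
    obtain ⟨⟨hk1, hk2, _, _⟩, _, hbr⟩ := hGmem kj hkj
    exact dyadic_nested (by omega) hbr htI
  set a : ℝ := (∑ kj ∈ G, ((2:ℝ) ^ (((kj.1:ℝ) - 1) / 2) * ‖x kj‖) ^ r) ^ (1 / r) with ha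
  have hsum_lower : ∀ s ∈ I,
      (∑ kj ∈ G, ((2:ℝ) ^ (((kj.1:ℝ) - 1) / 2) * ‖x kj‖) ^ r) ≤
      ∑ k ∈ Finset.Icc 1 n, ‖∑ j ∈ Finset.Icc (1:ℤ) (2 ^ (k - 1)), haar k j s • x (k, j)‖ ^ r := by
    intro s hs
    have hterm : ∀ kj ∈ G, ((2:ℝ) ^ (((kj.1:ℝ) - 1) / 2) * ‖x kj‖) ^ r =
        ‖∑ j ∈ Finset.Icc (1:ℤ) (2 ^ (kj.1 - 1)), haar kj.1 j s • x (kj.1, j)‖ ^ r := by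
      intro kj hkj
      obtain ⟨⟨hk1, hk2, hj1, hj2⟩, _, _⟩ := hGmem kj hkj
      have hsI : s ∈ dyadic (kj.1 - 1) kj.2 := hIsub kj hkj hs
      have hsingle : ∑ j ∈ Finset.Icc (1:ℤ) (2 ^ (kj.1 - 1)), haar kj.1 j s • x (kj.1, j)
          = haar kj.1 kj.2 s • x (kj.1, kj.2) := by
        apply Finset.sum_eq_single
        · intro j hj hne
          rw [haar_eq_zero hk1 (fun h' => hne (dyadic_eq_of_mem h' hsI))]
          simp
        · intro hnot
          exact absurd (Finset.mem_Icc.2 ⟨hj1, hj2⟩) hnot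
      rw [hsingle, norm_smul, Real.norm_eq_abs, abs_haar hk1 hsI]
    rw [Finset.sum_congr rfl hterm]
    have hinj : ∀ p ∈ G, ∀ q ∈ G, p.1 = q.1 → p = q := by
      intro p hp q hq hpq
      obtain ⟨_, _, hbp⟩ := hGmem p hp
      obtain ⟨_, _, hbq⟩ := hGmem q hq
      rw [hpq] at hbp
      exact Prod.ext hpq (dyadic_eq_of_mem hbp hbq)
    calc ∑ kj ∈ G, ‖∑ j ∈ Finset.Icc (1:ℤ) (2 ^ (kj.1 - 1)), haar kj.1 j s • x (kj.1, j)‖ ^ r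
        = ∑ k ∈ G.image Prod.fst,
            ‖∑ j ∈ Finset.Icc (1:ℤ) (2 ^ (k - 1)), haar k j s • x (k, j)‖ ^ r :=
          (Finset.sum_image (f := fun k : ℕ =>
            ‖∑ j ∈ Finset.Icc (1:ℤ) (2 ^ (k - 1)), haar k j s • x (k, j)‖ ^ r) hinj).symm
      _ ≤ ∑ k ∈ Finset.Icc 1 n,
            ‖∑ j ∈ Finset.Icc (1:ℤ) (2 ^ (k - 1)), haar k j s • x (k, j)‖ ^ r := by
          apply Finset.sum_le_sum_of_subset_of_nonneg
          · intro k hk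
            obtain ⟨kj, hkj, rfl⟩ := Finset.mem_image.1 hk
            obtain ⟨⟨h1, h2, _, _⟩, _, _⟩ := hGmem kj hkj
            exact Finset.mem_Icc.2 ⟨h1, h2⟩
          · intro k _ _
            exact Real.rpow_nonneg (norm_nonneg _) r
  -- a > S
  have haS : S < a := by
    have hA := two_rpow_pos ((l:ℝ) / r)
    have hpow : ((2:ℝ) ^ ((l:ℝ) / r)) ^ r = (2:ℝ) ^ l := by
      rw [← Real.rpow_natCast (2:ℝ) l, ← Real.rpow_mul (by norm_num : (0:ℝ) ≤ 2),
        div_mul_cancel₀ _ hr.ne']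
    have hconst : (S / (2:ℝ) ^ ((l:ℝ) / r)) ^ r = S ^ r / 2 ^ l := by
      rw [Real.div_rpow hSpos.le hA.le, hpow]
    have hstrict : ∑ _kj ∈ G, (S / (2:ℝ) ^ ((l:ℝ) / r)) ^ r <
        ∑ kj ∈ G, ((2:ℝ) ^ (((kj.1:ℝ) - 1) / 2) * ‖x kj‖) ^ r := by
      apply Finset.sum_lt_sum_of_nonempty hGne
      intro kj hkj
      obtain ⟨_, ⟨hP1, _⟩, _⟩ := hGmem kj hkj
      exact Real.rpow_lt_rpow (by positivity) hP1 hr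
    have hSr : 0 < S ^ r := Real.rpow_pos_of_pos hSpos r
    have hcardR : ((2:ℝ) ^ l) ≤ (G.card : ℝ) := by exact_mod_cast hcard
    have hlhs : S ^ r ≤ ∑ _kj ∈ G, (S / (2:ℝ) ^ ((l:ℝ) / r)) ^ r := by
      rw [Finset.sum_const, nsmul_eq_mul, hconst]
      calc S ^ r = (2:ℝ) ^ l * (S ^ r / 2 ^ l) := by field_simp
      _ ≤ (G.card : ℝ) * (S ^ r / 2 ^ l) := by
          apply mul_le_mul_of_nonneg_right hcardR (by positivity)
    have hkey : S ^ r < ∑ kj ∈ G, ((2:ℝ) ^ (((kj.1:ℝ) - 1) / 2) * ‖x kj‖) ^ r :=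
      lt_of_le_of_lt hlhs hstrict
    have hSid : (S ^ r) ^ (1 / r) = S := by
      rw [← Real.rpow_mul hSpos.le, mul_one_div_cancel hr.ne', Real.rpow_one]
    calc S = (S ^ r) ^ (1 / r) := hSid.symm
    _ < a := by
        rw [ha]
        exact Real.rpow_lt_rpow hSr.le hkey (by positivity)
  -- a ≤ f on I
  have hfI : ∀ s ∈ I, a ≤ f s := by
    intro s hs
    rw [ha, hf]
    apply Real.rpow_le_rpow ?_ (hsum_lower s hs) (by positivity)
    exact Finset.sum_nonneg fun kj _ => Real.rpow_nonneg (by positivity) r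
  -- boundedness of f
  set B : ℝ := (∑ k ∈ Finset.Icc 1 n,
      (∑ j ∈ Finset.Icc (1:ℤ) (2 ^ (k - 1)), (2:ℝ) ^ (((k:ℝ) - 1) / 2) * ‖x (k, j)‖) ^ r) ^ (1 / r)
    with hB
  have hbd : ∀ s, f s ≤ B := by
    intro s
    rw [hf, hB]
    apply Real.rpow_le_rpow
      (Finset.sum_nonneg fun k _ => Real.rpow_nonneg (norm_nonneg _) r) ?_ (by positivity)
    apply Finset.sum_le_sum
    intro k _
    apply Real.rpow_le_rpow (norm_nonneg _) ?_ hr.le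
    calc ‖∑ j ∈ Finset.Icc (1:ℤ) (2 ^ (k - 1)), haar k j s • x (k, j)‖
        ≤ ∑ j ∈ Finset.Icc (1:ℤ) (2 ^ (k - 1)), ‖haar k j s • x (k, j)‖ := norm_sum_le _ _
      _ ≤ ∑ j ∈ Finset.Icc (1:ℤ) (2 ^ (k - 1)), (2:ℝ) ^ (((k:ℝ) - 1) / 2) * ‖x (k, j)‖ := by
          apply Finset.sum_le_sum
          intro j _
          rw [norm_smul, Real.norm_eq_abs]
          exact mul_le_mul_of_nonneg_right (abs_haar_le k j s) (norm_nonneg _)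
  -- frequently a ≤ f
  have hImeas : MeasurableSet I := by rw [hI]; exact measurableSet_Ico
  have hfreq : ∃ᶠ s in (ae μ'), a ≤ f s := by
    rw [MeasureTheory.frequently_ae_iff]
    intro h0
    have hle : μ' I ≤ μ' {s | a ≤ f s} := measure_mono (fun s hs => hfI s hs)
    have hI0 : μ' I = 0 := le_antisymm (h0 ▸ hle) zero_le
    rw [hμ', Measure.restrict_apply hImeas, Set.inter_eq_left.2 hI01] at hI0
    have hvol : volume I = ENNReal.ofReal ((j0:ℝ) / 2 ^ N - ((j0:ℝ) - 1) / 2 ^ N) := by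
      rw [hI]; exact Real.volume_Ico
    have hpos : (0:ℝ) < (j0:ℝ) / 2 ^ N - ((j0:ℝ) - 1) / 2 ^ N := by
      have he : (j0:ℝ) / 2 ^ N - ((j0:ℝ) - 1) / 2 ^ N = 1 / 2 ^ N := by ring
      rw [he]; positivity
    rw [hvol] at hI0
    rw [ENNReal.ofReal_eq_zero] at hI0
    linarith
  have hbdd : Filter.IsBoundedUnder (· ≤ ·) (ae μ') f := Filter.isBoundedUnder_of ⟨B, hbd⟩
  have hfin : a ≤ Filter.limsup f (ae μ') := Filter.le_limsup_of_frequently_le hfreq hbdd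
  have hess : essSup f μ' = Filter.limsup f (ae μ') := rfl
  rw [hS] at haS
  rw [← hess] at hfin
  exact absurd hfin (not_le.2 haS)
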